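/- arXiv:2412.03713 — 11 statements merged into one kernel-verified Lean document; each statement's English description precedes it below -/
import Mathlib

section
/- Let Q be an n×m matrix and R an m×n matrix with complex entries, and let A := fromBlocks 0 Q R 0 be the associated (n+m)×(n+m) block matrix. If μ ∈ ℂ is a nonzero eigenvalue of M := R·Q, then every ν ∈ ℂ with ν² = μ (equivalently, both square roots ±√μ of μ) is an eigenvalue of A. -/
open Matrix

/-- If `μ` is a nonzero eigenvalue of `M = R·Q`, then every square root `ν` of `μ`
is an eigenvalue of the block matrix `A = fromBlocks 0 Q R 0`. -/
theorem sqrt_mem_spectrum_blockMatrix_of_mem_spectrum_RQ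
    {n m : ℕ}
    (Q : Matrix (Fin n) (Fin m) ℂ) (R : Matrix (Fin m) (Fin n) ℂ)
    (A : Matrix (Fin n ⊕ Fin m) (Fin n ⊕ Fin m) ℂ)
    (hA : A = Matrix.fromBlocks 0 Q R 0)
    (μ : ℂ) (hμ : μ ∈ spectrum ℂ (R * Q)) (hμ0 : μ ≠ 0)
    (ν : ℂ) (hν : ν ^ 2 = μ) :
    ν ∈ spectrum ℂ A := by
  have hν0 : ν ≠ 0 := by rintro rfl; simp at hν; exact hμ0 hν.symm
  rw [← AlgEquiv.spectrum_eq (Matrix.toLinAlgEquiv'),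
    ← Module.End.hasEigenvalue_iff_mem_spectrum] at hμ ⊢
  obtain ⟨v, hv⟩ := hμ.exists_hasEigenvector
  have hv0 : v ≠ 0 := hv.right
  have hvEq : (R * Q) *ᵥ v = μ • v := by
    have := hv.apply_eq_smul
    simpa [toLinAlgEquiv_apply, Matrix.toLin_apply] using this
  refine Module.End.hasEigenvalue_of_hasEigenvector
    (x := Sum.elim (Q *ᵥ v) (ν • v)) ⟨?_, ?_⟩
  · rw [Module.End.mem_eigenspace_iff]
    show A *ᵥ _ = _
    have hRQ : R *ᵥ (Q *ᵥ v) = (ν * ν) • v := by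
      rw [mulVec_mulVec, hvEq, ← hν]; ring_nf
    rw [hA, fromBlocks_mulVec]
    ext i
    cases i with
    | inl i => simp [mulVec_smul]
    | inr i => simp [Sum.elim_comp_inl, Sum.elim_comp_inr, hRQ, smul_smul, mul_assoc]
  · obtain ⟨i, hi⟩ := Function.ne_iff.mp hv0
    intro h
    have := congrFun h (Sum.inr i)
    simp at this
    rcases this with h' | h'
    · exact hν0 h'
    · exact hi h'
end

section
/- Let Q be an n×m matrix and R an m×n matrix with complex entries. If v₁, v₂ ∈ ℂ^m are linearly independent vectors satisfying (R·Q)·vᵢ = νᵢ²·vᵢ with νᵢ ∈ ℂ, νᵢ ≠ 0 (i = 1, 2), then the four vectors (ν₁⁻¹·(Q·v₁), v₁), (−ν₁⁻¹·(Q·v₁), v₁), (ν₂⁻¹·(Q·v₂), v₂), (−ν₂⁻¹·(Q·v₂), v₂) in ℂ^n × ℂ^m are linearly independent. -/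
open Matrix

/-- If `v₁, v₂` are linearly independent eigenvectors of `R·Q` with nonzero eigenvalues
`ν₁², ν₂²`, then the four vectors `(±νᵢ⁻¹·(Q·vᵢ), vᵢ)` are linearly independent. -/
theorem blockMatrix_four_eigenvectors_linearIndependent
    {n m : ℕ}
    (Q : Matrix (Fin n) (Fin m) ℂ) (R : Matrix (Fin m) (Fin n) ℂ)
    (v₁ v₂ : Fin m → ℂ) (ν₁ ν₂ : ℂ)
    (hind : LinearIndependent ℂ ![v₁, v₂])
    (hν₁ : ν₁ ≠ 0) (hν₂ : ν₂ ≠ 0)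
    (h₁ : (R * Q).mulVec v₁ = (ν₁ ^ 2) • v₁)
    (h₂ : (R * Q).mulVec v₂ = (ν₂ ^ 2) • v₂) :
    LinearIndependent ℂ
      ![Sum.elim (ν₁⁻¹ • Q.mulVec v₁) v₁,
        Sum.elim (-ν₁⁻¹ • Q.mulVec v₁) v₁,
        Sum.elim (ν₂⁻¹ • Q.mulVec v₂) v₂,
        Sum.elim (-ν₂⁻¹ • Q.mulVec v₂) v₂] := by
  have key : ∀ s t : ℂ, s • v₁ + t • v₂ = 0 → s = 0 ∧ t = 0 :=
    LinearIndependent.pair_iff.mp hind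
  rw [Fintype.linearIndependent_iff]
  intro g hg
  rw [Fin.sum_univ_four] at hg
  have hinr : (g 0 + g 1) • v₁ + (g 2 + g 3) • v₂ = 0 := by
    funext j
    have h := congrFun hg (Sum.inr j)
    simp only [Matrix.cons_val_zero, Matrix.cons_val_one, Matrix.head_cons,
      Matrix.cons_val_two, Matrix.tail_cons, Matrix.cons_val_three,
      Pi.add_apply, Pi.smul_apply, Sum.elim_inr, Pi.zero_apply, smul_eq_mul] at h ⊢
    linear_combination h
  have hinl : ((g 0 - g 1) * ν₁⁻¹) • Q.mulVec v₁
      + ((g 2 - g 3) * ν₂⁻¹) • Q.mulVec v₂ = 0 := by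
    funext i
    have h := congrFun hg (Sum.inl i)
    simp only [Matrix.cons_val_zero, Matrix.cons_val_one, Matrix.head_cons,
      Matrix.cons_val_two, Matrix.tail_cons, Matrix.cons_val_three,
      Pi.add_apply, Pi.smul_apply, Sum.elim_inl, Pi.zero_apply, smul_eq_mul,
      Pi.neg_apply, neg_mul, neg_smul] at h ⊢
    linear_combination h
  have h5 : ((g 0 - g 1) * ν₁⁻¹) • (R * Q).mulVec v₁
      + ((g 2 - g 3) * ν₂⁻¹) • (R * Q).mulVec v₂ = 0 := by
    have := congrArg R.mulVec hinl
    simpa [Matrix.mulVec_add, Matrix.mulVec_smul, Matrix.mulVec_mulVec] using this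
  rw [h₁, h₂, smul_smul, smul_smul] at h5
  obtain ⟨e1, e2⟩ := key _ _ h5
  obtain ⟨f1, f2⟩ := key _ _ hinr
  have d1 : g 0 - g 1 = 0 := by
    rw [mul_assoc] at e1
    exact (mul_eq_zero.mp e1).resolve_right
      (mul_ne_zero (inv_ne_zero hν₁) (pow_ne_zero 2 hν₁))
  have d2 : g 2 - g 3 = 0 := by
    rw [mul_assoc] at e2
    exact (mul_eq_zero.mp e2).resolve_right
      (mul_ne_zero (inv_ne_zero hν₂) (pow_ne_zero 2 hν₂))
  intro i
  fin_cases i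
  · show g 0 = 0; linear_combination (f1 + d1) / 2
  · show g 1 = 0; linear_combination (f1 - d1) / 2
  · show g 2 = 0; linear_combination (f2 + d2) / 2
  · show g 3 = 0; linear_combination (f2 - d2) / 2
end

section
/- Let Q be an n×m matrix and R an m×n matrix with complex entries, and suppose that M := R·Q (an m×m complex matrix) is diagonalizable and invertible. Then the block matrix A := fromBlocks 0 Q R 0 is diagonalizable, and its spectrum is σ(A) = {ν ∈ ℂ : ν² ∈ σ(M)} if n = m, and σ(A) = {0} ∪ {ν ∈ ℂ : ν² ∈ σ(M)} if n ≠ m. -/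
open Matrix

/-- A square matrix `B` over a field `K` is diagonalizable if `B = S·D·S⁻¹` for some
invertible matrix `S` and diagonal matrix `D`. -/
def Matrix.IsDiagonalizable {K : Type*} [Field K] {ι : Type*} [Fintype ι] [DecidableEq ι]
    (B : Matrix ι ι K) : Prop :=
  ∃ S D : Matrix ι ι K, IsUnit S ∧ D.IsDiag ∧ B = S * D * S⁻¹

theorem aux_spec {n m : ℕ} (Q : Matrix (Fin n) (Fin m) ℂ) (R : Matrix (Fin m) (Fin n) ℂ)
    (ν : ℂ) (hν : ν ≠ 0) :
    ν ∈ spectrum ℂ (Matrix.fromBlocks 0 Q R 0 : Matrix (Fin n ⊕ Fin m) (Fin n ⊕ Fin m) ℂ)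
      ↔ ν ^ 2 ∈ spectrum ℂ (R * Q) := by
  have hinv1 : (ν • (1 : Matrix (Fin n) (Fin n) ℂ)) * (ν⁻¹ • (1 : Matrix (Fin n) (Fin n) ℂ)) = 1 := by
    rw [smul_mul_smul_comm, mul_inv_cancel₀ hν, one_mul, one_smul]
  have hinv2 : (ν⁻¹ • (1 : Matrix (Fin n) (Fin n) ℂ)) * (ν • (1 : Matrix (Fin n) (Fin n) ℂ)) = 1 := by
    rw [smul_mul_smul_comm, inv_mul_cancel₀ hν, one_mul, one_smul]
  letI iA : Invertible (ν • (1 : Matrix (Fin n) (Fin n) ℂ)) := ⟨ν⁻¹ • 1, hinv2, hinv1⟩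
  have hscalar : (algebraMap ℂ (Matrix (Fin n ⊕ Fin m) (Fin n ⊕ Fin m) ℂ)) ν
      - Matrix.fromBlocks 0 Q R 0
      = Matrix.fromBlocks (ν • 1) (-Q) (-R) (ν • 1) := by
    rw [Algebra.algebraMap_eq_smul_one, ← fromBlocks_one, fromBlocks_smul]
    ext (i | i) (j | j) <;> simp [fromBlocks]
  have hdet : ((algebraMap ℂ (Matrix (Fin n ⊕ Fin m) (Fin n ⊕ Fin m) ℂ)) ν
      - Matrix.fromBlocks 0 Q R 0).det
      = ν ^ n * (ν⁻¹) ^ m * ((ν ^ 2 • (1 : Matrix (Fin m) (Fin m) ℂ) - (R * Q)).det) := by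
    rw [hscalar, det_fromBlocks₁₁]
    have hi : (⅟(ν • (1 : Matrix (Fin n) (Fin n) ℂ))) = ν⁻¹ • (1 : Matrix (Fin n) (Fin n) ℂ) := rfl
    rw [hi]
    have h2 : (-R) * (ν⁻¹ • (1 : Matrix (Fin n) (Fin n) ℂ)) * (-Q) = ν⁻¹ • (R * Q) := by
      rw [Matrix.mul_smul, Matrix.mul_one, Matrix.smul_mul]
      congr 1
      simp
    have h1 : (ν • (1 : Matrix (Fin m) (Fin m) ℂ)) - (-R) * (ν⁻¹ • (1 : Matrix (Fin n) (Fin n) ℂ)) * (-Q)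
        = ν⁻¹ • (ν ^ 2 • (1 : Matrix (Fin m) (Fin m) ℂ) - R * Q) := by
      rw [h2, smul_sub, smul_smul]
      congr 2
      field_simp
    rw [h1, det_smul, det_smul, det_one, mul_one, Fintype.card_fin, Fintype.card_fin]
    ring
  have e2 : (algebraMap ℂ (Matrix (Fin m) (Fin m) ℂ)) (ν ^ 2) - R * Q
      = ν ^ 2 • (1 : Matrix (Fin m) (Fin m) ℂ) - R * Q := by
    rw [Algebra.algebraMap_eq_smul_one]
  rw [spectrum.mem_iff, spectrum.mem_iff, Matrix.isUnit_iff_isUnit_det,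
    Matrix.isUnit_iff_isUnit_det, hdet, e2, isUnit_iff_ne_zero, isUnit_iff_ne_zero]
  simp [hν, inv_ne_zero, pow_ne_zero, mul_ne_zero_iff]


theorem aux_unit {m : ℕ} (Q R : Matrix (Fin m) (Fin m) ℂ) (hinv : IsUnit (R * Q)) :
    IsUnit (Matrix.fromBlocks 0 Q R 0 : Matrix (Fin m ⊕ Fin m) (Fin m ⊕ Fin m) ℂ) := by
  have hdet : IsUnit (R * Q).det := (Matrix.isUnit_iff_isUnit_det _).mp hinv
  rw [Matrix.det_mul] at hdet
  have hR : IsUnit R.det := isUnit_of_mul_isUnit_left hdet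
  have hQ : IsUnit Q.det := isUnit_of_mul_isUnit_right hdet
  have h1 : (Matrix.fromBlocks 0 Q R 0 : Matrix (Fin m ⊕ Fin m) (Fin m ⊕ Fin m) ℂ)
      * Matrix.fromBlocks 0 R⁻¹ Q⁻¹ 0 = 1 := by
    rw [Matrix.fromBlocks_multiply]
    simp [Matrix.mul_nonsing_inv Q hQ, Matrix.mul_nonsing_inv R hR, ← Matrix.fromBlocks_one]
  letI := invertibleOfRightInverse _ _ h1
  exact isUnit_of_invertible _

theorem aux_le {n m : ℕ} (Q : Matrix (Fin n) (Fin m) ℂ) (R : Matrix (Fin m) (Fin n) ℂ)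
    (hinv : IsUnit (R * Q)) : m ≤ n := by
  have h1 := Matrix.rank_mul_le_left R Q
  have h2 : (R * Q).rank = m := by rw [Matrix.rank_of_isUnit _ hinv, Fintype.card_fin]
  have h3 := Matrix.rank_le_card_width R
  rw [Fintype.card_fin] at h3
  omega

theorem aux_zero {n m : ℕ} (Q : Matrix (Fin n) (Fin m) ℂ) (R : Matrix (Fin m) (Fin n) ℂ)
    (hlt : m < n) :
    (0 : ℂ) ∈ spectrum ℂ (Matrix.fromBlocks 0 Q R 0 : Matrix (Fin n ⊕ Fin m) (Fin n ⊕ Fin m) ℂ) := by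
  rw [spectrum.zero_mem_iff]
  intro hU
  -- R has a nontrivial kernel
  have hrank : R.rank < n := lt_of_le_of_lt (Matrix.rank_le_height R) hlt
  have hker : LinearMap.ker R.mulVecLin ≠ ⊥ := by
    intro hbot
    have h3 := LinearMap.finrank_range_add_finrank_ker R.mulVecLin
    have h4 : R.rank = Module.finrank ℂ (LinearMap.range R.mulVecLin) := rfl
    rw [hbot, finrank_bot, ← h4] at h3
    rw [Module.finrank_fintype_fun_eq_card, Fintype.card_fin] at h3
    omega
  obtain ⟨x, hxK, hx0⟩ := Submodule.exists_mem_ne_zero_of_ne_bot hker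
  have hRx : R *ᵥ x = 0 := by rwa [LinearMap.mem_ker, Matrix.mulVecLin_apply] at hxK
  have hAx : (Matrix.fromBlocks 0 Q R 0 : Matrix (Fin n ⊕ Fin m) (Fin n ⊕ Fin m) ℂ)
      *ᵥ Sum.elim x 0 = 0 := by
    rw [Matrix.fromBlocks_mulVec]
    funext t
    rcases t with i | j <;> simp [hRx]
  have hinj := Matrix.mulVec_injective_iff_isUnit.mpr hU
  have h5 : Sum.elim x (0 : Fin m → ℂ) = 0 := hinj (by rw [hAx, Matrix.mulVec_zero])
  exact hx0 (by funext i; exact congrFun h5 (Sum.inl i))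

theorem aux_diag {n m : ℕ} (Q : Matrix (Fin n) (Fin m) ℂ) (R : Matrix (Fin m) (Fin n) ℂ)
    (hdiag : (R * Q).IsDiagonalizable) (hinv : IsUnit (R * Q)) :
    (Matrix.fromBlocks 0 Q R 0 : Matrix (Fin n ⊕ Fin m) (Fin n ⊕ Fin m) ℂ).IsDiagonalizable := by
  set A : Matrix (Fin n ⊕ Fin m) (Fin n ⊕ Fin m) ℂ := Matrix.fromBlocks 0 Q R 0 with hA
  rcases isEmpty_or_nonempty (Fin n ⊕ Fin m) with hemp | hne
  · exact ⟨1, A, isUnit_one, fun i _ _ => hemp.elim i, by rw [inv_one, Matrix.one_mul, Matrix.mul_one]⟩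
  obtain ⟨S, D, hS, hD, hM⟩ := hdiag
  have hdetS : IsUnit S.det := (Matrix.isUnit_iff_isUnit_det S).mp hS
  have hS'S : S⁻¹ * S = 1 := Matrix.nonsing_inv_mul S hdetS
  have hSS' : S * S⁻¹ = 1 := Matrix.mul_nonsing_inv S hdetS
  have hDeq : D = S⁻¹ * (R * Q) * S := by
    rw [hM]
    simp only [Matrix.mul_assoc]
    rw [hS'S, Matrix.mul_one, ← Matrix.mul_assoc, hS'S, Matrix.one_mul]
  have hSinv : IsUnit S⁻¹ :=
    (Matrix.isUnit_iff_isUnit_det _).mpr (S.isUnit_nonsing_inv_det hdetS)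
  have hDunit : IsUnit D := by rw [hDeq]; exact (hSinv.mul hinv).mul hS
  set d : Fin m → ℂ := D.diag with hd
  have hDdiag : D = Matrix.diagonal d := (hD.diagonal_diag).symm
  have hdne : ∀ j, d j ≠ 0 := by
    intro j hj
    have h1 : IsUnit D.det := (Matrix.isUnit_iff_isUnit_det D).mp hDunit
    rw [hDdiag, Matrix.det_diagonal] at h1
    rw [isUnit_iff_ne_zero] at h1
    exact h1 (Finset.prod_eq_zero (Finset.mem_univ j) hj)
  set μ : Fin m → ℂ := fun j => d j ^ (((2:ℕ) : ℂ))⁻¹ with hμ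
  have hμsq : ∀ j, μ j ^ 2 = d j := fun j => Complex.cpow_nat_inv_pow _ two_ne_zero
  have hμne : ∀ j, μ j ≠ 0 := by
    intro j hj
    exact hdne j (by rw [← hμsq j, hj]; ring)
  -- columns of S
  set s : Fin m → (Fin m → ℂ) := fun j i => S i j with hscol
  have hs : ∀ x : Fin m → ℂ, S *ᵥ x = ∑ j, x j • s j := by
    intro x
    funext i
    simp [Matrix.mulVec, dotProduct, Finset.sum_apply, hscol, mul_comm]
  have hSmul : (R * Q) * S = S * D := by
    rw [hM, Matrix.mul_assoc, hS'S, Matrix.mul_one]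
  have hMs : ∀ j, (R * Q) *ᵥ s j = d j • s j := by
    intro j
    funext i
    have h1 : ((R * Q) *ᵥ s j) i = ((R * Q) * S) i j := by
      simp [Matrix.mulVec, Matrix.mul_apply, dotProduct, hscol]
    rw [h1, hSmul, hDdiag, Matrix.mul_diagonal]
    simp [hscol, mul_comm]
  -- kernel of R
  set K : Submodule ℂ (Fin n → ℂ) := LinearMap.ker R.mulVecLin with hK
  set k : ℕ := Module.finrank ℂ K with hk
  have hrkR : R.rank = m := by
    refine le_antisymm (Matrix.rank_le_height R) ?_
    have h1 := Matrix.rank_mul_le_left R Q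
    have h2 : (R * Q).rank = m := by
      rw [Matrix.rank_of_isUnit _ hinv, Fintype.card_fin]
    omega
  have hrk : m + k = n := by
    have h3 := LinearMap.finrank_range_add_finrank_ker (R.mulVecLin)
    have h4 : R.rank = Module.finrank ℂ (LinearMap.range R.mulVecLin) := rfl
    rw [← h4, hrkR] at h3
    rw [hk, hK]
    rw [h3]
    simp
  let e : Fin n ≃ Fin m ⊕ Fin k := (finCongr hrk.symm).trans finSumFinEquiv.symm
  let bK : Module.Basis (Fin k) ℂ K := Module.finBasis ℂ K
  set w : Fin k → (Fin n → ℂ) := fun l => (bK l : Fin n → ℂ) with hw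
  have hw0 : ∀ l, R *ᵥ w l = 0 := by
    intro l
    have h5 : (bK l : Fin n → ℂ) ∈ LinearMap.ker R.mulVecLin := (bK l).2
    rwa [LinearMap.mem_ker, Matrix.mulVecLin_apply] at h5
  have hwli : LinearIndependent ℂ w :=
    bK.linearIndependent.map' K.subtype (Submodule.ker_subtype _)
  -- eigenvalue and eigenvector families
  set ν : Fin n ⊕ Fin m → ℂ :=
    Sum.elim (fun i => Sum.elim (fun j => -(μ j)) (fun _ => 0) (e i)) μ with hν
  set v : Fin n ⊕ Fin m → (Fin n ⊕ Fin m → ℂ) :=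
    Sum.elim
      (fun i => Sum.elim (fun j => Sum.elim (Q *ᵥ s j) (-(μ j • s j)))
        (fun l => Sum.elim (w l) 0) (e i))
      (fun j => Sum.elim (Q *ᵥ s j) (μ j • s j)) with hv
  have hAmul : ∀ (x : Fin n → ℂ) (y : Fin m → ℂ),
      A *ᵥ Sum.elim x y = Sum.elim (Q *ᵥ y) (R *ᵥ x) := by
    intro x y
    rw [hA, fromBlocks_mulVec]
    simp
  have hsmulSum : ∀ (c : ℂ) (x : Fin n → ℂ) (y : Fin m → ℂ),
      c • Sum.elim x y = Sum.elim (c • x) (c • y) := by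
    intro c x y
    funext t
    cases t <;> rfl
  have heig : ∀ t, A *ᵥ v t = ν t • v t := by
    rintro (i | j)
    · rcases he : e i with j | l
      · have h6 : v (Sum.inl i) = Sum.elim (Q *ᵥ s j) (-(μ j • s j)) := by
          rw [hv]; simp [he]
        have h7 : ν (Sum.inl i) = -(μ j) := by rw [hν]; simp [he]
        rw [h6, h7, hAmul, hsmulSum]
        simp [Matrix.mulVec_neg, Matrix.mulVec_smul, Matrix.mulVec_mulVec, hMs,
          smul_smul, ← hμsq, sq]
      · have h6 : v (Sum.inl i) = Sum.elim (w l) 0 := by rw [hv]; simp [he]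
        have h7 : ν (Sum.inl i) = 0 := by rw [hν]; simp [he]
        rw [h6, h7, hAmul, hsmulSum, hw0 l]
        simp
    · have h6 : v (Sum.inr j) = Sum.elim (Q *ᵥ s j) (μ j • s j) := rfl
      have h7 : ν (Sum.inr j) = μ j := rfl
      rw [h6, h7, hAmul, hsmulSum]
      simp [Matrix.mulVec_smul, Matrix.mulVec_mulVec, hMs, smul_smul, ← hμsq, sq]
  have hSinj : ∀ x : Fin m → ℂ, S *ᵥ x = 0 → x = 0 := by
    intro x hx
    have hinj := Matrix.mulVec_injective_iff_isUnit.mpr hS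
    exact hinj (by rw [hx, Matrix.mulVec_zero])
  have hli : LinearIndependent ℂ v := by
    rw [Fintype.linearIndependent_iff]
    intro g hg
    have hsplit : ∀ (f : (Fin n ⊕ Fin m) → (Fin n ⊕ Fin m → ℂ)),
        ∑ t, f t = (∑ j, f (Sum.inl (e.symm (Sum.inl j)))
          + ∑ l, f (Sum.inl (e.symm (Sum.inr l)))) + ∑ j, f (Sum.inr j) := by
      intro f
      rw [Fintype.sum_sum_type]
      congr 1
      rw [← Equiv.sum_comp e.symm (fun i => f (Sum.inl i)), Fintype.sum_sum_type]
    rw [hsplit] at hg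
    have hv1 : ∀ j : Fin m, v (Sum.inl (e.symm (Sum.inl j)))
        = Sum.elim (Q *ᵥ s j) (-(μ j • s j)) := by
      intro j; rw [hv]; simp
    have hv2 : ∀ l : Fin k, v (Sum.inl (e.symm (Sum.inr l))) = Sum.elim (w l) 0 := by
      intro l; rw [hv]; simp
    have hv3 : ∀ j : Fin m, v (Sum.inr j) = Sum.elim (Q *ᵥ s j) (μ j • s j) := fun _ => rfl
    simp only [hv1, hv2, hv3] at hg
    have hfl : ∀ (x : Fin n → ℂ) (y : Fin m → ℂ),
        (LinearMap.funLeft ℂ ℂ (Sum.inl : Fin n → Fin n ⊕ Fin m)) (Sum.elim x y) = x := by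
      intro x y; funext i; rfl
    have hfr : ∀ (x : Fin n → ℂ) (y : Fin m → ℂ),
        (LinearMap.funLeft ℂ ℂ (Sum.inr : Fin m → Fin n ⊕ Fin m)) (Sum.elim x y) = y := by
      intro x y; funext i; rfl
    -- bottom components
    have hbot := congrArg (LinearMap.funLeft ℂ ℂ (Sum.inr : Fin m → Fin n ⊕ Fin m)) hg
    simp only [map_add, map_sum, _root_.map_smul, map_zero, LinearMap.funLeft_apply,
      hfr, smul_zero, Finset.sum_const_zero, add_zero] at hbot
    -- top components
    have htop := congrArg (LinearMap.funLeft ℂ ℂ (Sum.inl : Fin n → Fin n ⊕ Fin m)) hg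
    simp only [map_add, map_sum, _root_.map_smul, map_zero, LinearMap.funLeft_apply,
      hfl] at htop
    have hab' : ∀ j, g (Sum.inr j) = g (Sum.inl (e.symm (Sum.inl j))) := by
      have hkey : S *ᵥ (fun j => (g (Sum.inr j) - g (Sum.inl (e.symm (Sum.inl j)))) * μ j) = 0 := by
        rw [hs]
        calc (∑ j, ((g (Sum.inr j) - g (Sum.inl (e.symm (Sum.inl j)))) * μ j) • s j)
            = ∑ j, (g (Sum.inl (e.symm (Sum.inl j))) • -(μ j • s j)
                + g (Sum.inr j) • μ j • s j) := by
              refine Finset.sum_congr rfl fun j _ => ?_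
              module
          _ = 0 := by rw [Finset.sum_add_distrib]; exact hbot
      intro j
      have h8 := congrFun (hSinj _ hkey) j
      simp only [Pi.zero_apply] at h8
      rcases mul_eq_zero.mp h8 with h | h
      · exact sub_eq_zero.mp h
      · exact absurd h (hμne j)
    have htop2 := congrArg (R.mulVecLin) htop
    simp only [map_add, map_sum, _root_.map_smul, Matrix.mulVecLin_apply,
      Matrix.mulVec_mulVec, hMs, hw0, smul_zero, Finset.sum_const_zero, add_zero,
      map_zero] at htop2
    have ha : ∀ j, g (Sum.inr j) = 0 := by
      have hkey : S *ᵥ (fun j => (g (Sum.inr j) + g (Sum.inl (e.symm (Sum.inl j)))) * d j) = 0 := by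
        rw [hs]
        calc (∑ j, ((g (Sum.inr j) + g (Sum.inl (e.symm (Sum.inl j)))) * d j) • s j)
            = ∑ j, (g (Sum.inl (e.symm (Sum.inl j))) • (d j • s j)
                + g (Sum.inr j) • (d j • s j)) := by
              refine Finset.sum_congr rfl fun j _ => ?_
              module
          _ = 0 := by rw [Finset.sum_add_distrib]; exact htop2
      intro j
      have h9 := congrFun (hSinj _ hkey) j
      simp only [Pi.zero_apply] at h9
      rcases mul_eq_zero.mp h9 with h | h
      · rw [← hab' j] at h
        linear_combination h / 2
      · exact absurd h (hdne j)
    have hb : ∀ j, g (Sum.inl (e.symm (Sum.inl j))) = 0 := fun j => by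
      rw [← hab' j]; exact ha j
    have hc : ∀ l, g (Sum.inl (e.symm (Sum.inr l))) = 0 := by
      simp only [ha, hb, zero_smul, Finset.sum_const_zero, zero_add, add_zero] at htop
      exact Fintype.linearIndependent_iff.mp hwli _ htop
    rintro (i | j)
    · have h10 : i = e.symm (e i) := (e.symm_apply_apply i).symm
      rcases he : e i with j | l
      · rw [h10, he]; exact hb j
      · rw [h10, he]; exact hc l
    · exact ha j
  have hcard : Fintype.card (Fin n ⊕ Fin m) = Module.finrank ℂ ((Fin n ⊕ Fin m) → ℂ) := by
    simp [Module.finrank_fintype_fun_eq_card]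
  let bv : Module.Basis (Fin n ⊕ Fin m) ℂ ((Fin n ⊕ Fin m) → ℂ) :=
    basisOfLinearIndependentOfCardEqFinrank hli hcard
  have hbv : ⇑bv = v := coe_basisOfLinearIndependentOfCardEqFinrank _ _
  set T : Matrix (Fin n ⊕ Fin m) (Fin n ⊕ Fin m) ℂ :=
    (Pi.basisFun ℂ (Fin n ⊕ Fin m)).toMatrix ⇑bv with hT
  haveI : Invertible T := (Pi.basisFun ℂ (Fin n ⊕ Fin m)).invertibleToMatrix bv
  have hTunit : IsUnit T := isUnit_of_invertible T
  have hTapp : ∀ i t, T i t = v t i := by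
    intro i t
    rw [hT, Module.Basis.toMatrix_apply, hbv, Pi.basisFun_repr]
  have hAT : A * T = T * Matrix.diagonal ν := by
    ext i t
    have h1 : (A * T) i t = (A *ᵥ v t) i := by
      simp [Matrix.mul_apply, Matrix.mulVec, dotProduct, hTapp]
    rw [h1, heig t, Matrix.mul_diagonal, hTapp]
    simp [mul_comm]
  refine ⟨T, Matrix.diagonal ν, hTunit, Matrix.isDiag_diagonal ν, ?_⟩
  have hdetT : IsUnit T.det := (Matrix.isUnit_iff_isUnit_det T).mp hTunit
  calc A = A * (T * T⁻¹) := by rw [Matrix.mul_nonsing_inv T hdetT, Matrix.mul_one]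
    _ = A * T * T⁻¹ := by rw [Matrix.mul_assoc]
    _ = T * Matrix.diagonal ν * T⁻¹ := by rw [hAT]

/-- If `M = R·Q` is diagonalizable and invertible, then `A = fromBlocks 0 Q R 0` is
diagonalizable and its spectrum is `{ν : ν² ∈ σ(M)}` if `n = m`, and
`{0} ∪ {ν : ν² ∈ σ(M)}` if `n ≠ m`. -/
theorem blockMatrix_isDiagonalizable_and_spectrum
    {n m : ℕ}
    (Q : Matrix (Fin n) (Fin m) ℂ) (R : Matrix (Fin m) (Fin n) ℂ)
    (A : Matrix (Fin n ⊕ Fin m) (Fin n ⊕ Fin m) ℂ)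
    (hA : A = Matrix.fromBlocks 0 Q R 0)
    (hdiag : (R * Q).IsDiagonalizable) (hinv : IsUnit (R * Q)) :
    A.IsDiagonalizable ∧
    (n = m → spectrum ℂ A = {ν : ℂ | ν ^ 2 ∈ spectrum ℂ (R * Q)}) ∧
    (n ≠ m → spectrum ℂ A = insert 0 {ν : ℂ | ν ^ 2 ∈ spectrum ℂ (R * Q)}) := by
  subst hA
  refine ⟨aux_diag Q R hdiag hinv, ?_, ?_⟩
  · intro hnm
    subst hnm
    ext ν
    simp only [Set.mem_setOf_eq]
    by_cases hν : ν = 0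
    · subst hν
      have h1 : (0 : ℂ) ∉ spectrum ℂ
          (Matrix.fromBlocks 0 Q R 0 : Matrix (Fin n ⊕ Fin n) (Fin n ⊕ Fin n) ℂ) := by
        rw [spectrum.zero_mem_iff]
        exact not_not_intro (aux_unit Q R hinv)
      have h2 : (0 : ℂ) ^ 2 ∉ spectrum ℂ (R * Q) := by
        rw [show (0 : ℂ) ^ 2 = 0 by ring, spectrum.zero_mem_iff]
        exact not_not_intro hinv
      exact ⟨fun h => absurd h h1, fun h => absurd h h2⟩
    · exact aux_spec Q R ν hν
  · intro hnm
    have hlt : m < n := lt_of_le_of_ne (aux_le Q R hinv) (fun h => hnm h.symm)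
    ext ν
    rw [Set.mem_insert_iff]
    simp only [Set.mem_setOf_eq]
    by_cases hν : ν = 0
    · subst hν
      exact ⟨fun _ => Or.inl rfl, fun _ => aux_zero Q R hlt⟩
    · rw [aux_spec Q R ν hν]
      exact ⟨fun h => Or.inr h, fun h => h.resolve_left hν⟩
end

section
/- Let Q be an n×m matrix and R an m×n matrix with real entries such that R·Q = c·I_m for some real c > 0. Then the block matrix A := fromBlocks 0 Q R 0 is diagonalizable over ℝ, its spectrum is contained in {0, √c, −√c}, both √c and −√c are eigenvalues of A (provided m ≥ 1), and 0 is an eigenvalue of A if and only if n > m. -/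
open Matrix

/-- If `R·Q = c·I` with `c > 0`, then `A = fromBlocks 0 Q R 0` is diagonalizable over ℝ,
its spectrum is contained in `{0, √c, −√c}`, both `±√c` are eigenvalues (when `m ≥ 1`),
and `0` is an eigenvalue iff `n > m`. -/
theorem blockMatrix_spectrum_of_RQ_scalar
    {n m : ℕ}
    (Q : Matrix (Fin n) (Fin m) ℝ) (R : Matrix (Fin m) (Fin n) ℝ)
    (c : ℝ) (hc : 0 < c)
    (hRQ : R * Q = c • (1 : Matrix (Fin m) (Fin m) ℝ))
    (A : Matrix (Fin n ⊕ Fin m) (Fin n ⊕ Fin m) ℝ)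
    (hA : A = Matrix.fromBlocks 0 Q R 0) :
    A.IsDiagonalizable ∧
    spectrum ℝ A ⊆ {0, Real.sqrt c, -Real.sqrt c} ∧
    (1 ≤ m → Real.sqrt c ∈ spectrum ℝ A ∧ -Real.sqrt c ∈ spectrum ℝ A) ∧
    (0 ∈ spectrum ℝ A ↔ m < n) := by
  have hs0 : (0 : ℝ) < Real.sqrt c := Real.sqrt_pos.mpr hc
  set s : ℝ := Real.sqrt c with hs_def
  have hs2 : s * s = c := Real.mul_self_sqrt hc.le
  have hsne : s ≠ 0 := ne_of_gt hs0
  have hcne : c ≠ 0 := ne_of_gt hc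
  -- the associated endomorphism
  set f : Module.End ℝ ((Fin n ⊕ Fin m) → ℝ) := Matrix.toLin' A with hf_def
  have hspec : spectrum ℝ A = spectrum ℝ f := by
    rw [hf_def]
    exact (AlgEquiv.spectrum_eq (Matrix.toLinAlgEquiv' (R := ℝ) (n := Fin n ⊕ Fin m)) A).symm
  have hmulA : ∀ (w : Fin n → ℝ) (v : Fin m → ℝ),
      A.mulVec (Sum.elim w v) = Sum.elim (Q.mulVec v) (R.mulVec w) := by
    intro w v
    rw [hA, Matrix.fromBlocks_mulVec]
    simp
  have hfapp : ∀ x, f x = A.mulVec x := fun x => Matrix.toLin'_apply A x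
  -- eigenvectors for ± s
  have hplus : ∀ v : Fin m → ℝ,
      Sum.elim (s⁻¹ • Q.mulVec v) v ∈ f.eigenspace s := by
    intro v
    rw [Module.End.mem_eigenspace_iff, hfapp, hmulA]
    funext k
    rcases k with i | j
    · simp only [Sum.elim_inl, Pi.smul_apply, smul_eq_mul]
      field_simp
    · simp only [Sum.elim_inr, Pi.smul_apply, Matrix.mulVec_smul, Matrix.mulVec_mulVec, hRQ,
        Matrix.smul_mulVec, Matrix.one_mulVec, smul_eq_mul]
      rw [← hs2]
      field_simp
  have hminus : ∀ v : Fin m → ℝ,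
      Sum.elim (-(s⁻¹) • Q.mulVec v) v ∈ f.eigenspace (-s) := by
    intro v
    rw [Module.End.mem_eigenspace_iff, hfapp, hmulA]
    funext k
    rcases k with i | j
    · simp only [Sum.elim_inl, Pi.smul_apply, smul_eq_mul]
      field_simp
    · simp only [Sum.elim_inr, Pi.smul_apply, Matrix.mulVec_smul, Matrix.mulVec_mulVec, hRQ,
        Matrix.smul_mulVec, Matrix.one_mulVec, smul_eq_mul]
      rw [← hs2]
      field_simp
  have hzero : ∀ w : Fin n → ℝ, R.mulVec w = 0 →
      Sum.elim w 0 ∈ f.eigenspace 0 := by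
    intro w hw
    rw [Module.End.mem_eigenspace_iff, hfapp, hmulA, hw]
    funext k
    rcases k with i | j <;> simp
  -- the three eigenspaces
  set μ : Fin 3 → ℝ := ![s, -s, 0] with hμ_def
  set E : Fin 3 → Submodule ℝ ((Fin n ⊕ Fin m) → ℝ) := fun i => f.eigenspace (μ i) with hE_def
  have hμinj : Function.Injective μ := by
    intro i j hij
    have h0 : μ 0 = s := rfl
    have h1 : μ 1 = -s := rfl
    have h2 : μ 2 = 0 := rfl
    fin_cases i <;> fin_cases j <;>
      simp only [show (⟨0, by omega⟩ : Fin 3) = 0 from rfl,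
        show (⟨1, by omega⟩ : Fin 3) = 1 from rfl,
        show (⟨2, by omega⟩ : Fin 3) = 2 from rfl, h0, h1, h2] at hij ⊢ <;>
      first | rfl | linarith
  have hTop : ⨆ i, E i = ⊤ := by
    rw [eq_top_iff]
    intro x _
    set w : Fin n → ℝ := x ∘ Sum.inl with hw_def
    set v : Fin m → ℝ := x ∘ Sum.inr with hv_def
    set u : Fin m → ℝ := R.mulVec w with hu_def
    set α : Fin m → ℝ := (2 : ℝ)⁻¹ • (v + s⁻¹ • u) with hα_def
    set β : Fin m → ℝ := (2 : ℝ)⁻¹ • (v - s⁻¹ • u) with hβ_def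
    set w₀ : Fin n → ℝ := w - c⁻¹ • Q.mulVec u with hw0_def
    have hw0 : R.mulVec w₀ = 0 := by
      rw [hw0_def]
      rw [Matrix.mulVec_sub, Matrix.mulVec_smul, Matrix.mulVec_mulVec, hRQ]
      simp [Matrix.smul_mulVec, Matrix.one_mulVec, smul_smul, inv_mul_cancel₀ hcne,
        ← hu_def]
    have hxdecomp : x = Sum.elim (s⁻¹ • Q.mulVec α) α + Sum.elim (-(s⁻¹) • Q.mulVec β) β
        + Sum.elim w₀ 0 := by
      funext k
      rcases k with i | j
      · simp only [Pi.add_apply, Sum.elim_inl, Pi.smul_apply, smul_eq_mul, hw0_def,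
          Pi.sub_apply, hα_def, hβ_def]
        have hx : x (Sum.inl i) = w i := rfl
        have hcinv : c⁻¹ = s⁻¹ * s⁻¹ := by rw [← hs2, _root_.mul_inv_rev]
        simp only [Matrix.mulVec_smul, Matrix.mulVec_add, Matrix.mulVec_sub,
          Pi.smul_apply, Pi.add_apply, Pi.sub_apply, smul_eq_mul, hcinv, hx]
        ring
      · have hx : x (Sum.inr j) = v j := rfl
        simp only [Pi.add_apply, Sum.elim_inr, hα_def, hβ_def, Pi.smul_apply, Pi.add_apply,
          Pi.sub_apply, smul_eq_mul, Pi.zero_apply, hx]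
        ring
    rw [hxdecomp]
    refine Submodule.add_mem _ (Submodule.add_mem _ ?_ ?_) ?_
    · exact Submodule.mem_iSup_of_mem 0 (by simpa [hE_def, hμ_def] using hplus α)
    · exact Submodule.mem_iSup_of_mem 1 (by simpa [hE_def, hμ_def] using hminus β)
    · exact Submodule.mem_iSup_of_mem 2 (by simpa [hE_def, hμ_def] using hzero w₀ hw0)
  have hInd : iSupIndep E := f.eigenspaces_iSupIndep.comp hμinj
  have hInt : DirectSum.IsInternal E :=
    (DirectSum.isInternal_submodule_iff_iSupIndep_and_iSup_eq_top E).mpr ⟨hInd, hTop⟩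
  -- part 1 : diagonalizable
  have part1 : A.IsDiagonalizable := by
    classical
    let b0 := hInt.collectedBasis (fun i => Module.finBasis ℝ (E i))
    have hcard : Fintype.card ((i : Fin 3) × Fin (Module.finrank ℝ (E i)))
        = Fintype.card (Fin n ⊕ Fin m) := by
      rw [← Module.finrank_eq_card_basis b0, Module.finrank_pi]
    let e := Fintype.equivOfCardEq hcard
    let b := b0.reindex e
    have hb : ∀ k, f (b k) = μ (e.symm k).1 • b k := by
      intro k
      have hmem : b0 (e.symm k) ∈ E (e.symm k).1 :=
        hInt.collectedBasis_mem (fun i => Module.finBasis ℝ (E i)) (e.symm k)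
      have := Module.End.mem_eigenspace_iff.mp hmem
      simpa [b, Module.Basis.reindex_apply] using this
    let P : Module.Basis (Fin n ⊕ Fin m) ℝ ((Fin n ⊕ Fin m) → ℝ) := Pi.basisFun ℝ (Fin n ⊕ Fin m)
    refine ⟨P.toMatrix b, LinearMap.toMatrix b b f, ?_, ?_, ?_⟩
    · exact IsUnit.of_mul_eq_one (b := b.toMatrix P) (Module.Basis.toMatrix_mul_toMatrix_flip _ _)
    · intro i j hij
      rw [LinearMap.toMatrix_apply, hb, _root_.map_smul, Module.Basis.repr_self]
      simp [Finsupp.single_apply, Ne.symm hij]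
    · have hinv : (P.toMatrix b)⁻¹ = b.toMatrix P :=
        Matrix.inv_eq_right_inv (Module.Basis.toMatrix_mul_toMatrix_flip _ _)
      rw [hinv, basis_toMatrix_mul_linearMap_toMatrix_mul_basis_toMatrix,
        LinearMap.toMatrix_eq_toMatrix']
      rw [hf_def, LinearMap.toMatrix'_toLin']
  -- A³ = c A
  have hA2 : A * A = Matrix.fromBlocks (Q * R) 0 0 (c • 1) := by
    rw [hA, Matrix.fromBlocks_multiply]
    simp [hRQ]
  have hA3 : A * A * A = c • A := by
    have h1 : Q * R * Q = c • Q := by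
      rw [Matrix.mul_assoc, hRQ, Matrix.mul_smul, Matrix.mul_one]
    rw [hA2, hA, Matrix.fromBlocks_multiply, Matrix.fromBlocks_smul]
    simp [h1, Matrix.smul_mul]
  -- part 2 : spectrum subset
  have part2 : spectrum ℝ A ⊆ {0, s, -s} := by
    intro lam hlam
    have hnt : Nontrivial (Matrix (Fin n ⊕ Fin m) (Fin n ⊕ Fin m) ℝ) := by
      rcases subsingleton_or_nontrivial (Matrix (Fin n ⊕ Fin m) (Fin n ⊕ Fin m) ℝ) with h | h
      · exact absurd (isUnit_of_subsingleton _) (spectrum.mem_iff.mp hlam)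
      · exact h
    have haev : Polynomial.aeval A (Polynomial.X ^ 3 - Polynomial.C c * Polynomial.X) = 0 := by
      simp only [_root_.map_sub, _root_.map_mul, Polynomial.aeval_X_pow, Polynomial.aeval_C,
        Polynomial.aeval_X]
      rw [pow_succ, pow_two, hA3, Algebra.algebraMap_eq_smul_one, Matrix.smul_mul,
        Matrix.one_mul, sub_self]
    have hmem : Polynomial.eval lam (Polynomial.X ^ 3 - Polynomial.C c * Polynomial.X)
        ∈ spectrum ℝ ((0 : Matrix (Fin n ⊕ Fin m) (Fin n ⊕ Fin m) ℝ)) := by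
      rw [← haev]
      exact spectrum.subset_polynomial_aeval A _ ⟨lam, hlam, rfl⟩
    rw [spectrum.zero_eq] at hmem
    have heq : lam ^ 3 - c * lam = 0 := by simpa using hmem
    have hfac : lam * (lam - s) * (lam + s) = 0 := by linear_combination heq - lam * hs2
    simp only [Set.mem_insert_iff, Set.mem_singleton_iff]
    rcases mul_eq_zero.mp hfac with h1 | h2
    · rcases mul_eq_zero.mp h1 with h | h
      · exact Or.inl h
      · exact Or.inr (Or.inl (sub_eq_zero.mp h))
    · exact Or.inr (Or.inr (eq_neg_of_add_eq_zero_left h2))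
  -- part 3 : ± s are eigenvalues when 1 ≤ m
  have part3 : 1 ≤ m → s ∈ spectrum ℝ A ∧ -s ∈ spectrum ℝ A := by
    intro hm
    have : NeZero m := ⟨by omega⟩
    set v : Fin m → ℝ := Pi.single ⟨0, hm⟩ 1 with hv_def
    have hxplusne : Sum.elim (s⁻¹ • Q.mulVec v) v ≠ 0 := by
      intro h0
      have := congrFun h0 (Sum.inr ⟨0, hm⟩)
      simp [hv_def] at this
    have hxminusne : Sum.elim (-(s⁻¹) • Q.mulVec v) v ≠ 0 := by
      intro h0
      have := congrFun h0 (Sum.inr ⟨0, hm⟩)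
      simp [hv_def] at this
    constructor
    · rw [hspec]
      exact Module.End.hasEigenvalue_iff_mem_spectrum.mp
        (Module.End.hasEigenvalue_of_hasEigenvector ⟨hplus v, hxplusne⟩)
    · rw [hspec]
      exact Module.End.hasEigenvalue_iff_mem_spectrum.mp
        (Module.End.hasEigenvalue_of_hasEigenvector ⟨hminus v, hxminusne⟩)
  -- part 4 : 0 is an eigenvalue iff m < n
  have hmn : m ≤ n := by
    have h1 : (R * Q).rank = m := by
      rw [hRQ]
      have hu : IsUnit (c • (1 : Matrix (Fin m) (Fin m) ℝ)) := by
        rw [Matrix.isUnit_iff_isUnit_det]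
        simp [Matrix.det_smul, hcne]
      simpa using Matrix.rank_of_isUnit _ hu
    have h2 : (R * Q).rank ≤ n := le_trans (Matrix.rank_mul_le_left R Q)
      (by simpa using Matrix.rank_le_width R)
    omega
  have part4 : 0 ∈ spectrum ℝ A ↔ m < n := by
    constructor
    · intro h0
      by_contra hlt
      have hnm : n = m := by omega
      subst hnm
      have hRQ1 : (c⁻¹ • R) * Q = 1 := by
        rw [Matrix.smul_mul, hRQ, smul_smul, inv_mul_cancel₀ hcne, one_smul]
      have hQR1 : Q * (c⁻¹ • R) = 1 := mul_eq_one_comm.mp hRQ1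
      have hunit : IsUnit A := by
        apply IsUnit.of_mul_eq_one
          (b := Matrix.fromBlocks 0 (c⁻¹ • Q) (c⁻¹ • R) 0)
        rw [hA, Matrix.fromBlocks_multiply]
        rw [show Q * (c⁻¹ • R) = 1 from hQR1]
        rw [show R * (c⁻¹ • Q) = 1 by
          rw [Matrix.mul_smul, ← Matrix.smul_mul, hRQ1]]
        simp [Matrix.fromBlocks_one]
      have := spectrum.mem_iff.mp h0
      rw [map_zero, zero_sub] at this
      exact this hunit.neg
    · intro hlt
      have hker : LinearMap.ker R.mulVecLin ≠ ⊥ := by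
        intro hbot
        have hinj : Function.Injective R.mulVecLin := LinearMap.ker_eq_bot.mp hbot
        have := LinearMap.finrank_le_finrank_of_injective hinj
        simp only [Module.finrank_pi, Fintype.card_fin] at this
        omega
      obtain ⟨w, hw, hw0⟩ := Submodule.exists_mem_ne_zero_of_ne_bot hker
      have hwker : R.mulVec w = 0 := hw
      have hxne : Sum.elim w (0 : Fin m → ℝ) ≠ 0 := by
        intro h0
        apply hw0
        funext i
        exact congrFun h0 (Sum.inl i)
      rw [hspec]
      exact Module.End.hasEigenvalue_iff_mem_spectrum.mp
        (Module.End.hasEigenvalue_of_hasEigenvector ⟨hzero w hwker, hxne⟩)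
  exact ⟨part1, part2, part3, part4⟩
end

section
/- Let β₁, β₂, β₃, δ₁, δ₂, δ₃, η be real numbers, and define the 3×2 matrix Q⊥ := (1/2)·![![δ₁, −δ₁], ![δ₂, −δ₂], ![δ₃ + 2η, −δ₃]] and the 2×3 matrix R⊥ := ![![β₁, β₂, β₃], ![0, 0, β₃]]. Then R⊥·Q⊥ = (1/2)·![![β₁δ₁+β₂δ₂+β₃δ₃ + 2β₃η, −(β₁δ₁+β₂δ₂+β₃δ₃)], ![β₃(δ₃+2η), −β₃δ₃]], and the characteristic polynomial of R⊥·Q⊥ equals (X − (β₁δ₁+β₂δ₂)/2)·(X − β₃η); in particular, the eigenvalues of R⊥·Q⊥ are (β₁δ₁+β₂δ₂)/2 and β₃η. -/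
open Matrix Polynomial

/-- The product of the vector-block matrices `R⊥` and `Q⊥` of the principal symbol, its
characteristic polynomial, and its eigenvalues `(β₁δ₁+β₂δ₂)/2` and `β₃η`. -/
theorem vectorBlock_product_charpoly
    (β₁ β₂ β₃ δ₁ δ₂ δ₃ η : ℝ)
    (Qperp : Matrix (Fin 3) (Fin 2) ℝ)
    (hQ : Qperp = (1/2 : ℝ) • !![δ₁, -δ₁; δ₂, -δ₂; δ₃ + 2*η, -δ₃])
    (Rperp : Matrix (Fin 2) (Fin 3) ℝ)
    (hR : Rperp = !![β₁, β₂, β₃; 0, 0, β₃]) :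
    Rperp * Qperp = (1/2 : ℝ) •
      !![β₁*δ₁ + β₂*δ₂ + β₃*δ₃ + 2*β₃*η, -(β₁*δ₁ + β₂*δ₂ + β₃*δ₃);
         β₃*(δ₃ + 2*η), -(β₃*δ₃)] ∧
    (Rperp * Qperp).charpoly =
      (X - C ((β₁*δ₁ + β₂*δ₂)/2)) * (X - C (β₃*η)) ∧
    spectrum ℝ (Rperp * Qperp) = {(β₁*δ₁ + β₂*δ₂)/2, β₃*η} := by
  subst hQ hR
  have hprod : (!![β₁, β₂, β₃; 0, 0, β₃] : Matrix (Fin 2) (Fin 3) ℝ) *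
      ((1/2 : ℝ) • !![δ₁, -δ₁; δ₂, -δ₂; δ₃ + 2*η, -δ₃]) = (1/2 : ℝ) •
      !![β₁*δ₁ + β₂*δ₂ + β₃*δ₃ + 2*β₃*η, -(β₁*δ₁ + β₂*δ₂ + β₃*δ₃);
         β₃*(δ₃ + 2*η), -(β₃*δ₃)] := by
    ext i j
    fin_cases i <;> fin_cases j <;>
      simp [Matrix.mul_apply, Fin.sum_univ_succ] <;> ring
  rw [hprod]
  set M : Matrix (Fin 2) (Fin 2) ℝ := (1/2 : ℝ) •
      !![β₁*δ₁ + β₂*δ₂ + β₃*δ₃ + 2*β₃*η, -(β₁*δ₁ + β₂*δ₂ + β₃*δ₃);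
         β₃*(δ₃ + 2*η), -(β₃*δ₃)] with hM
  have hchar : M.charpoly = (X - C ((β₁*δ₁ + β₂*δ₂)/2)) * (X - C (β₃*η)) := by
    rw [Matrix.charpoly, det_fin_two, charmatrix_apply_eq, charmatrix_apply_eq,
      charmatrix_apply_ne _ _ _ (by decide), charmatrix_apply_ne _ _ _ (by decide)]
    apply Polynomial.funext
    intro r
    simp [hM]
    ring
  refine ⟨rfl, hchar, ?_⟩
  ext x
  have : x ∈ spectrum ℝ M ↔ ¬ IsUnit ((algebraMap ℝ (Matrix (Fin 2) (Fin 2) ℝ)) x - M) :=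
    spectrum.mem_iff
  rw [this, Matrix.isUnit_iff_isUnit_det, isUnit_iff_ne_zero, not_not]
  have hdet : ((algebraMap ℝ (Matrix (Fin 2) (Fin 2) ℝ)) x - M).det =
      (x - (β₁*δ₁ + β₂*δ₂)/2) * (x - β₃*η) := by
    rw [det_fin_two]
    simp [hM, Matrix.algebraMap_matrix_apply]
    ring
  rw [hdet, mul_eq_zero, sub_eq_zero, sub_eq_zero]
  simp [Set.mem_insert_iff]
end

section
/- Let β₁, β₂, β₃, δ₁, δ₂, δ₃, η be real numbers satisfying β₁δ₁ + β₂δ₂ + β₃δ₃ = 0, δ₃ = −2η, and β₃·η > 0. Define the 3×2 matrix Q⊥ := (1/2)·![![δ₁, −δ₁], ![δ₂, −δ₂], ![δ₃ + 2η, −δ₃]] and the 2×3 matrix R⊥ := ![![β₁, β₂, β₃], ![0, 0, β₃]]. Then R⊥·Q⊥ = (β₃η)·I₂, and the 5×5 block matrix A := fromBlocks 0 Q⊥ R⊥ 0 is diagonalizable over ℝ with spectrum exactly {0, √(β₃η), −√(β₃η)}. -/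
open Matrix

lemma aux_isUnit_conj {n : Type*} [Fintype n] [DecidableEq n] (S M : Matrix n n ℝ)
    (hS : IsUnit S.det) : IsUnit (S * M * S⁻¹) ↔ IsUnit M := by
  have h : S.det ≠ 0 := isUnit_iff_ne_zero.1 hS
  rw [Matrix.isUnit_iff_isUnit_det, Matrix.isUnit_iff_isUnit_det M, det_mul, det_mul,
    Matrix.det_nonsing_inv, Ring.inverse_eq_inv']
  simp [isUnit_iff_ne_zero, h, mul_eq_zero, inv_eq_zero]

set_option maxHeartbeats 4000000 in
set_option maxRecDepth 8000 in
/-- With the choice `β₁δ₁ + β₂δ₂ + β₃δ₃ = 0`, `δ₃ = −2η` and `β₃η > 0`, one has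
`R⊥·Q⊥ = (β₃η)·I` and the vector-block symbol `A = fromBlocks 0 Q⊥ R⊥ 0` is
diagonalizable over ℝ with spectrum `{0, √(β₃η), −√(β₃η)}`. -/
theorem vectorBlock_diagonalizable
    (β₁ β₂ β₃ δ₁ δ₂ δ₃ η : ℝ)
    (hsum : β₁*δ₁ + β₂*δ₂ + β₃*δ₃ = 0)
    (hδ₃ : δ₃ = -(2*η))
    (hpos : 0 < β₃ * η)
    (Qperp : Matrix (Fin 3) (Fin 2) ℝ)
    (hQ : Qperp = (1/2 : ℝ) • !![δ₁, -δ₁; δ₂, -δ₂; δ₃ + 2*η, -δ₃])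
    (Rperp : Matrix (Fin 2) (Fin 3) ℝ)
    (hR : Rperp = !![β₁, β₂, β₃; 0, 0, β₃])
    (A : Matrix (Fin 3 ⊕ Fin 2) (Fin 3 ⊕ Fin 2) ℝ)
    (hA : A = Matrix.fromBlocks 0 Qperp Rperp 0) :
    Rperp * Qperp = (β₃ * η) • (1 : Matrix (Fin 2) (Fin 2) ℝ) ∧
    A.IsDiagonalizable ∧
    spectrum ℝ A = {0, Real.sqrt (β₃*η), -Real.sqrt (β₃*η)} := by
  set s : ℝ := Real.sqrt (β₃*η) with hs_def
  have hs2 : s * s = β₃ * η := Real.mul_self_sqrt hpos.le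
  have hspos : 0 < s := Real.sqrt_pos.2 hpos
  have hs : s ≠ 0 := hspos.ne'
  have hη : η ≠ 0 := by rintro rfl; simp at hpos
  have hbd : β₁*δ₁ + β₂*δ₂ = 2*(β₃*η) := by rw [hδ₃] at hsum; linarith
  -- explicit form of Qperp
  have hQ' : Qperp = !![δ₁/2, -δ₁/2; δ₂/2, -δ₂/2; 0, η] := by
    rw [hQ, hδ₃]; ext i j
    fin_cases i <;> fin_cases j <;> simp <;> ring
  -- Part 1
  have hRQ : Rperp * Qperp = (β₃ * η) • (1 : Matrix (Fin 2) (Fin 2) ℝ) := by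
    rw [hQ', hR]; ext i j
    fin_cases i <;> fin_cases j <;>
      simp [Matrix.mul_apply, Fin.sum_univ_succ, Matrix.one_apply] <;> linarith
  -- the diagonalizing matrices
  obtain ⟨W, hW⟩ : ∃ M : Matrix (Fin 3) (Fin 3) ℝ, M = !![β₂, δ₁/2, -δ₁/2; -β₁, δ₂/2, -δ₂/2; 0, 0, η] := ⟨_, rfl⟩
  obtain ⟨X, hX⟩ : ∃ M : Matrix (Fin 3) (Fin 2) ℝ, M = !![δ₁/2, -δ₁/2; δ₂/2, -δ₂/2; 0, η] := ⟨_, rfl⟩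
  obtain ⟨Y, hY⟩ : ∃ M : Matrix (Fin 2) (Fin 3) ℝ, M = !![0, s, 0; 0, 0, s] := ⟨_, rfl⟩
  obtain ⟨Z, hZ⟩ : ∃ M : Matrix (Fin 2) (Fin 2) ℝ, M = !![-s, 0; 0, -s] := ⟨_, rfl⟩
  obtain ⟨S, hS⟩ : ∃ M : Matrix (Fin 3 ⊕ Fin 2) (Fin 3 ⊕ Fin 2) ℝ, M = fromBlocks W X Y Z := ⟨_, rfl⟩
  obtain ⟨D₁, hD₁⟩ : ∃ M : Matrix (Fin 3) (Fin 3) ℝ, M = diagonal ![0, s, s] := ⟨_, rfl⟩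
  obtain ⟨D₂, hD₂⟩ : ∃ M : Matrix (Fin 2) (Fin 2) ℝ, M = diagonal ![-s, -s] := ⟨_, rfl⟩
  obtain ⟨D, hD⟩ : ∃ M : Matrix (Fin 3 ⊕ Fin 2) (Fin 3 ⊕ Fin 2) ℝ, M = fromBlocks D₁ 0 0 D₂ := ⟨_, rfl⟩
  -- determinant of S
  have hdetS : S.det ≠ 0 := by
    haveI hZinv : Invertible Z := invertibleOfLeftInverse Z !![-s⁻¹, 0; 0, -s⁻¹] (by
        ext i j; fin_cases i <;> fin_cases j <;>
          simp [hZ, Matrix.mul_apply, Fin.sum_univ_succ, Matrix.one_apply, hs])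
    have hinvZ : (⅟Z : Matrix (Fin 2) (Fin 2) ℝ) = !![-s⁻¹, 0; 0, -s⁻¹] :=
      invOf_eq_right_inv (by
        ext i j; fin_cases i <;> fin_cases j <;>
          simp [hZ, Matrix.mul_apply, Fin.sum_univ_succ, Matrix.one_apply, hs])
    rw [hS, Matrix.det_fromBlocks₂₂, hinvZ]
    have h1 : W - X * !![-s⁻¹, 0; 0, -s⁻¹] * Y = !![β₂, δ₁, -δ₁; -β₁, δ₂, -δ₂; 0, 0, 2*η] := by
      ext i j; fin_cases i <;> fin_cases j <;>
        simp [hW, hX, hY, Matrix.mul_apply, Fin.sum_univ_succ, Matrix.vecHead,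
          Matrix.vecTail] <;> field_simp <;> ring
    have h2 : (!![β₂, δ₁, -δ₁; -β₁, δ₂, -δ₂; 0, 0, 2*η] : Matrix (Fin 3) (Fin 3) ℝ).det
        = 4*(β₃*η)*η := by
      simp [Matrix.det_fin_three]; linear_combination (2*η)*hbd
    have h3 : ((!![-s, 0; 0, -s] : Matrix (Fin 2) (Fin 2) ℝ)).det = β₃*η := by
      simp [Matrix.det_fin_two]; linarith [hs2]
    rw [h1, h2, hZ, h3]
    exact mul_ne_zero hpos.ne' (mul_ne_zero (mul_ne_zero four_ne_zero hpos.ne') hη)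
  have hSunit : IsUnit S := (Matrix.isUnit_iff_isUnit_det S).2 (isUnit_iff_ne_zero.2 hdetS)
  -- A * S = S * D
  have e11 : (0 : Matrix (Fin 3) (Fin 3) ℝ) * W + X * Y = W * D₁ + X * (0 : Matrix (Fin 2) (Fin 3) ℝ) := by
    ext i j; fin_cases i <;> fin_cases j <;>
      simp [hW, hX, hY, hD₁, Matrix.mul_apply, Fin.sum_univ_succ, Matrix.diagonal, Matrix.vecMul, dotProduct,
        Matrix.vecHead, Matrix.vecTail] <;> ring
  have e12 : (0 : Matrix (Fin 3) (Fin 3) ℝ) * X + X * Z = W * (0 : Matrix (Fin 3) (Fin 2) ℝ) + X * D₂ := by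
    ext i j; fin_cases i <;> fin_cases j <;>
      simp [hW, hX, hZ, hD₂, Matrix.mul_apply, Fin.sum_univ_succ, Matrix.diagonal, Matrix.vecMul, dotProduct,
        Matrix.vecHead, Matrix.vecTail] <;> ring
  have e21 : Rperp * W + (0 : Matrix (Fin 2) (Fin 2) ℝ) * Y = Y * D₁ + Z * (0 : Matrix (Fin 2) (Fin 3) ℝ) := by
    rw [hR]
    ext i j; fin_cases i <;> fin_cases j <;>
      simp [hW, hY, hZ, hD₁, Matrix.mul_apply, Fin.sum_univ_succ, Matrix.diagonal, Matrix.vecMul, dotProduct,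
        Matrix.vecHead, Matrix.vecTail] <;> nlinarith [hs2, hbd]
  have e22 : Rperp * X + (0 : Matrix (Fin 2) (Fin 2) ℝ) * Z = Y * (0 : Matrix (Fin 3) (Fin 2) ℝ) + Z * D₂ := by
    rw [hR]
    ext i j; fin_cases i <;> fin_cases j <;>
      simp [hX, hY, hZ, hD₂, Matrix.mul_apply, Fin.sum_univ_succ, Matrix.diagonal, Matrix.vecMul, dotProduct,
        Matrix.vecHead, Matrix.vecTail] <;> nlinarith [hs2, hbd]
  have hAS : A * S = S * D := by
    rw [hA, hQ'.trans hX.symm, hS, hD, fromBlocks_multiply, fromBlocks_multiply, e11, e12, e21, e22]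
  have hADS : A = S * D * S⁻¹ := by
    rw [← hAS, Matrix.mul_assoc, Matrix.mul_nonsing_inv _ (isUnit_iff_ne_zero.2 hdetS),
      Matrix.mul_one]
  have hDdiag : D.IsDiag := by
    rw [hD, hD₁, hD₂]
    exact (Matrix.isDiag_diagonal _).fromBlocks (Matrix.isDiag_diagonal _)
  refine ⟨hRQ, ⟨S, D, hSunit, hDdiag, hADS⟩, ?_⟩
  -- spectrum
  ext x
  rw [spectrum.mem_iff]
  have hc : (algebraMap ℝ (Matrix (Fin 3 ⊕ Fin 2) (Fin 3 ⊕ Fin 2) ℝ)) x - A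
      = S * (x • (1 : Matrix (Fin 3 ⊕ Fin 2) (Fin 3 ⊕ Fin 2) ℝ) - D) * S⁻¹ := by
    rw [hADS, Algebra.algebraMap_eq_smul_one, Matrix.mul_sub, Matrix.sub_mul]
    congr 1
    rw [Matrix.mul_smul, Matrix.mul_one, Matrix.smul_mul,
      Matrix.mul_nonsing_inv _ (isUnit_iff_ne_zero.2 hdetS)]
  rw [hc, aux_isUnit_conj _ _ (isUnit_iff_ne_zero.2 hdetS), Matrix.isUnit_iff_isUnit_det]
  have hblock : x • (1 : Matrix (Fin 3 ⊕ Fin 2) (Fin 3 ⊕ Fin 2) ℝ) - D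
      = fromBlocks (x • 1 - D₁) 0 0 (x • 1 - D₂) := by
    rw [← fromBlocks_one, hD, fromBlocks_smul, sub_eq_add_neg, fromBlocks_neg, fromBlocks_add]
    simp [← sub_eq_add_neg]
  have hdet : (x • (1 : Matrix (Fin 3 ⊕ Fin 2) (Fin 3 ⊕ Fin 2) ℝ) - D).det
      = (x * ((x - s) * (x - s))) * ((x + s) * (x + s)) := by
    rw [hblock, Matrix.det_fromBlocks_zero₁₂]
    rw [hD₁, hD₂, Matrix.smul_one_eq_diagonal, Matrix.smul_one_eq_diagonal,
      Matrix.diagonal_sub, Matrix.diagonal_sub, Matrix.det_diagonal, Matrix.det_diagonal,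
      Fin.prod_univ_three, Fin.prod_univ_two]
    simp only [Matrix.cons_val_zero, Matrix.cons_val_one, Matrix.head_cons,
      Matrix.cons_val_two, Matrix.tail_cons, Matrix.head_fin_const]
    ring
  rw [hdet]
  simp only [isUnit_iff_ne_zero, ne_eq, not_not, Set.mem_insert_iff, Set.mem_singleton_iff]
  constructor
  · intro h
    rcases mul_eq_zero.1 h with h | h
    · rcases mul_eq_zero.1 h with h | h
      · exact Or.inl h
      · have := mul_self_eq_zero.1 h
        exact Or.inr (Or.inl (by linarith))
    · have := mul_self_eq_zero.1 h
      exact Or.inr (Or.inr (by linarith))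
  · rintro (rfl | rfl | rfl) <;> ring
end

section
/- Let α₄, α₅, β₁, β₂, β₃, A₀, d be real numbers with d ≠ 0, and define the 3×3 matrix M∥ := ![![α₄β₂ − β₁, A₀β₃, α₅β₂ − β₃/d], ![α₄β₂ − β₁, A₀β₃, α₅β₂ − β₃/d], ![−A₀, 0, 1/d]] and the 2×2 matrix M̃∥ := ![![α₄β₂ − β₁ + A₀β₃, α₅β₂ − β₃/d], ![−A₀, 1/d]]. Then charpoly(M∥) = X · charpoly(M̃∥); in particular, the eigenvalues of M∥ are exactly 0 together with the eigenvalues of M̃∥. -/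
open Matrix Polynomial

lemma eval_charpoly_aux {n : Type*} [Fintype n] [DecidableEq n]
    (M : Matrix n n ℝ) (μ : ℝ) :
    (M.charpoly).eval μ = ((Matrix.scalar n μ) - M).det := by
  rw [Matrix.charpoly, ← Polynomial.coe_evalRingHom, RingHom.map_det]
  congr 1
  ext i j
  by_cases h : i = j
  · subst h; simp [Matrix.charmatrix_apply_eq]
  · simp [Matrix.charmatrix_apply_ne _ _ _ h, Matrix.scalar_apply,
      Matrix.diagonal_apply_ne _ h]

lemma mem_spectrum_iff_root {n : Type*} [Fintype n] [DecidableEq n]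
    (M : Matrix n n ℝ) (μ : ℝ) :
    μ ∈ spectrum ℝ M ↔ (M.charpoly).eval μ = 0 := by
  rw [spectrum.mem_iff, eval_charpoly_aux]
  have halg : (algebraMap ℝ (Matrix n n ℝ)) μ = Matrix.scalar n μ := rfl
  rw [halg, Matrix.isUnit_iff_isUnit_det, isUnit_iff_ne_zero, not_not]

/-- The characteristic polynomial of the scalar-block matrix `M∥` equals `X` times the
characteristic polynomial of the reduced matrix `M̃∥`; in particular the eigenvalues of
`M∥` are exactly `0` together with the eigenvalues of `M̃∥`. -/
theorem scalarBlock_charpoly_reduction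
    (α₄ α₅ β₁ β₂ β₃ A₀ d : ℝ) (hd : d ≠ 0)
    (Mpar : Matrix (Fin 3) (Fin 3) ℝ)
    (hM : Mpar = !![α₄*β₂ - β₁, A₀*β₃, α₅*β₂ - β₃/d;
                    α₄*β₂ - β₁, A₀*β₃, α₅*β₂ - β₃/d;
                    -A₀, 0, 1/d])
    (Mtil : Matrix (Fin 2) (Fin 2) ℝ)
    (hMt : Mtil = !![α₄*β₂ - β₁ + A₀*β₃, α₅*β₂ - β₃/d;
                     -A₀, 1/d]) :
    Mpar.charpoly = X * Mtil.charpoly ∧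
    spectrum ℝ Mpar = insert 0 (spectrum ℝ Mtil) := by
  have key : Mpar.charpoly = X * Mtil.charpoly := by
    subst hM hMt
    rw [Matrix.charpoly, Matrix.charpoly, Matrix.det_fin_three, Matrix.det_fin_two]
    simp only [Matrix.charmatrix_apply, Matrix.diagonal_apply, Matrix.cons_val', Matrix.cons_val_zero,
      Matrix.cons_val_one, Matrix.head_cons, Matrix.head_fin_const, Matrix.cons_val_fin_one,
      Matrix.empty_val', Matrix.cons_val_two, Matrix.tail_cons]
    simp only [Matrix.of_apply, Matrix.cons_val]
    norm_num [Fin.ext_iff, Matrix.one_apply]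
    ring
  refine ⟨key, ?_⟩
  ext μ
  rw [mem_spectrum_iff_root, key, Set.mem_insert_iff, mem_spectrum_iff_root]
  simp [eval_mul, mul_eq_zero, eq_comm]
end

section
/- Let A and H be n×n real matrices such that H is symmetric, positive definite, and H·A is symmetric. Then A is diagonalizable over ℝ: there exist an invertible real matrix S and a diagonal real matrix D with A = S·D·S⁻¹; in particular, every (complex) eigenvalue of A is real. -/
open Matrix

/-- If `A` admits a symmetrizer `H` (symmetric, positive definite, with `H·A` symmetric),
then `A` is diagonalizable over ℝ and every complex eigenvalue of `A` is real. -/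
theorem diagonalizable_of_symmetrizer
    {n : ℕ} (A H : Matrix (Fin n) (Fin n) ℝ)
    (hsymm : H.IsSymm) (hpos : H.PosDef) (hHA : (H * A).IsSymm) :
    (∃ S D : Matrix (Fin n) (Fin n) ℝ, IsUnit S ∧ D.IsDiag ∧ A = S * D * S⁻¹) ∧
    (∀ μ ∈ spectrum ℂ (A.map (Complex.ofReal)), μ.im = 0) := by
  classical
  have hHsd : H.PosSemidef := hpos.posSemidef
  set R := (open scoped MatrixOrder in CFC.sqrt H) with hRdef
  have hRsq : R * R = H := by open scoped MatrixOrder in exact CFC.sqrt_mul_sqrt_self H hHsd.nonneg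
  have hRherm : R.IsHermitian := by open scoped MatrixOrder in exact (CFC.sqrt_nonneg H).posSemidef.1
  have hRunit : IsUnit R := by
    have hH : IsUnit H.det := hpos.det_pos.ne'.isUnit
    rw [← hRsq, det_mul] at hH
    exact (isUnit_iff_isUnit_det _).2 (isUnit_of_mul_isUnit_left hH)
  have hRdet : IsUnit R.det := (isUnit_iff_isUnit_det _).1 hRunit
  have hRinv : R * R⁻¹ = 1 := mul_nonsing_inv _ hRdet
  have hRinv' : R⁻¹ * R = 1 := nonsing_inv_mul _ hRdet
  have key : Aᵀ * H = H * A := by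
    calc Aᵀ * H = Aᵀ * Hᵀ := by rw [hsymm]
      _ = (H * A)ᵀ := (transpose_mul H A).symm
      _ = H * A := hHA
  set B := R * A * R⁻¹ with hBdef
  have hRT : Rᵀ = R := by
    have := hRherm
    rwa [Matrix.IsHermitian, conjTranspose_eq_transpose_of_trivial] at this
  have hRiT : (R⁻¹)ᵀ = R⁻¹ := by rw [transpose_nonsing_inv, hRT]
  have hBherm : B.IsHermitian := by
    rw [Matrix.IsHermitian, conjTranspose_eq_transpose_of_trivial]
    have hBT : Bᵀ = R⁻¹ * Aᵀ * R := by
      rw [hBdef, transpose_mul, transpose_mul, hRT, hRiT, mul_assoc]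
    rw [hBT, hBdef]
    calc R⁻¹ * Aᵀ * R = R⁻¹ * Aᵀ * R * (R * R⁻¹) := by rw [hRinv, mul_one]
      _ = R⁻¹ * (Aᵀ * (R * R)) * R⁻¹ := by simp only [mul_assoc]
      _ = R⁻¹ * ((R * R) * A) * R⁻¹ := by rw [hRsq, key]
      _ = (R⁻¹ * R) * (R * A * R⁻¹) := by simp only [mul_assoc]
      _ = R * A * R⁻¹ := by rw [hRinv', one_mul]
  -- spectral theorem for B
  set U : Matrix (Fin n) (Fin n) ℝ := (hBherm.eigenvectorUnitary : Matrix (Fin n) (Fin n) ℝ)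
    with hUdef
  set d : Fin n → ℝ := hBherm.eigenvalues with hddef
  have hspec : B = U * diagonal (RCLike.ofReal ∘ d) * star U := hBherm.spectral_theorem
  have hUs : U * star U = 1 := (Matrix.mem_unitaryGroup_iff).mp hBherm.eigenvectorUnitary.2
  have hsU : star U * U = 1 := (Matrix.mem_unitaryGroup_iff').mp hBherm.eigenvectorUnitary.2
  have hUunit : IsUnit U := ⟨⟨U, star U, hUs, hsU⟩, rfl⟩
  set S := R⁻¹ * U with hSdef
  set D : Matrix (Fin n) (Fin n) ℝ := diagonal (RCLike.ofReal ∘ d) with hDdef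
  have hSunit : IsUnit S := ((isUnit_nonsing_inv_iff).2 hRunit).mul hUunit
  have hSinv : S⁻¹ = star U * R := by
    apply inv_eq_left_inv
    calc (star U * R) * (R⁻¹ * U) = star U * (R * R⁻¹) * U := by simp only [mul_assoc]
      _ = 1 := by rw [hRinv, mul_one, hsU]
  have hA_eq : A = S * D * S⁻¹ := by
    have h1 : R⁻¹ * B * R = A := by
      calc R⁻¹ * (R * A * R⁻¹) * R = (R⁻¹ * R) * A * (R⁻¹ * R) := by simp only [mul_assoc]
        _ = A := by rw [hRinv', one_mul, mul_one]
    rw [hSinv, hSdef]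
    calc A = R⁻¹ * B * R := h1.symm
      _ = R⁻¹ * (U * D * star U) * R := by rw [← hspec]
      _ = R⁻¹ * U * D * (star U * R) := by simp only [mul_assoc]
  refine ⟨⟨S, D, hSunit, isDiag_diagonal _, hA_eq⟩, ?_⟩
  -- every complex eigenvalue is real
  intro μ hμ
  set φ : Matrix (Fin n) (Fin n) ℝ →+* Matrix (Fin n) (Fin n) ℂ :=
    (Complex.ofRealHom).mapMatrix with hφdef
  have hφS : IsUnit (φ S) := hSunit.map φ
  have hφSinv : φ (S⁻¹) = (φ S)⁻¹ := by
    symm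
    apply inv_eq_left_inv
    rw [← _root_.map_mul, nonsing_inv_mul _ ((isUnit_iff_isUnit_det _).1 hSunit), _root_.map_one]
  have hmap : A.map Complex.ofReal = φ A := rfl
  have hconj : φ A = (hφS.unit : Matrix (Fin n) (Fin n) ℂ) * φ D *
      ((hφS.unit⁻¹ : (Matrix (Fin n) (Fin n) ℂ)ˣ) : Matrix (Fin n) (Fin n) ℂ) := by
    rw [hA_eq, _root_.map_mul, _root_.map_mul, hφSinv, IsUnit.unit_spec, Matrix.coe_units_inv,
      IsUnit.unit_spec]
  rw [hmap, hconj, spectrum.units_conjugate] at hμ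
  have hφD : φ D = diagonal (Complex.ofReal ∘ RCLike.ofReal ∘ d) := by
    show D.map Complex.ofRealHom = _
    rw [hDdef, diagonal_map (by simp)]
    rfl
  rw [hφD, spectrum_diagonal] at hμ
  obtain ⟨i, hi⟩ := hμ
  rw [← hi]
  simp
end

section
/- Let P₁, …, P_s be n×n real matrices satisfying Pⱼ·Pₖ = 0 for j ≠ k, Pⱼ·Pⱼ = Pⱼ for every j, and P₁ + ⋯ + P_s = I (a complete family of mutually annihilating projectors), and let λ₁, …, λ_s be real numbers. Set A := Σⱼ λⱼ·Pⱼ. Then H := Σⱼ Pⱼᵀ·Pⱼ is a symmetrizer for A, i.e. H is symmetric, positive definite, and H·A = Σⱼ λⱼ·Pⱼᵀ·Pⱼ is symmetric. -/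
open Matrix

/-- Given a complete family of mutually annihilating projectors `P₁, …, P_s` and reals
`λ₁, …, λ_s`, the matrix `H = Σⱼ Pⱼᵀ·Pⱼ` is a symmetrizer for `A = Σⱼ λⱼ·Pⱼ`:
`H` is symmetric, positive definite, and `H·A = Σⱼ λⱼ·Pⱼᵀ·Pⱼ` is symmetric. -/
theorem symmetrizer_of_spectral_projectors
    {n s : ℕ} (P : Fin s → Matrix (Fin n) (Fin n) ℝ)
    (horth : ∀ j k, j ≠ k → P j * P k = 0)
    (hproj : ∀ j, P j * P j = P j)
    (hsum : ∑ j, P j = 1)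
    (lam : Fin s → ℝ) :
    (∑ j, (P j)ᵀ * P j).IsSymm ∧
    (∑ j, (P j)ᵀ * P j).PosDef ∧
    (∑ j, (P j)ᵀ * P j) * (∑ j, lam j • P j) = ∑ j, lam j • ((P j)ᵀ * P j) ∧
    ((∑ j, (P j)ᵀ * P j) * (∑ j, lam j • P j)).IsSymm := by
  have hSymm : (∑ j, (P j)ᵀ * P j).IsSymm := by
    unfold Matrix.IsSymm
    rw [transpose_sum]
    refine Finset.sum_congr rfl fun j _ => ?_
    rw [transpose_mul, transpose_transpose]
  have hmul : (∑ j, (P j)ᵀ * P j) * (∑ j, lam j • P j) = ∑ j, lam j • ((P j)ᵀ * P j) := by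
    rw [Finset.sum_mul_sum]
    rw [Finset.sum_comm]
    refine Finset.sum_congr rfl fun k _ => ?_
    rw [Finset.sum_eq_single k]
    · rw [mul_smul_comm, mul_assoc, hproj]
    · intro j _ hjk
      rw [mul_smul_comm, mul_assoc, horth j k (by exact hjk), mul_zero, smul_zero]
    · intro h; exact absurd (Finset.mem_univ k) h
  have hsumMulVec : ∀ (M : Fin s → Matrix (Fin n) (Fin n) ℝ) (x : Fin n → ℝ),
      (∑ j, M j) *ᵥ x = ∑ j, M j *ᵥ x := by
    intro M x
    ext i
    simp only [Matrix.mulVec, dotProduct, Matrix.sum_apply, Finset.sum_apply,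
      Finset.sum_mul]
    exact Finset.sum_comm
  have hquad : ∀ x : Fin n → ℝ, x ⬝ᵥ (∑ j, (P j)ᵀ * P j) *ᵥ x
      = ∑ j, (P j *ᵥ x) ⬝ᵥ (P j *ᵥ x) := by
    intro x
    have hdot : ∀ v : Fin s → (Fin n → ℝ), x ⬝ᵥ (∑ j, v j) = ∑ j, x ⬝ᵥ (v j) := by
      intro v
      simp only [dotProduct, Finset.sum_apply, Finset.mul_sum]
      exact Finset.sum_comm
    rw [hsumMulVec, hdot]
    refine Finset.sum_congr rfl fun j _ => ?_
    rw [← mulVec_mulVec, dotProduct_mulVec, vecMul_transpose]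
  refine ⟨hSymm, ?_, hmul, ?_⟩
  · rw [posDef_iff_dotProduct_mulVec]
    constructor
    · rw [Matrix.IsHermitian, conjTranspose_eq_transpose_of_trivial]; exact hSymm
    · intro x hx
      simp only [RCLike.re_to_real, star_trivial]
      rw [hquad]
      have hne : ∃ j, P j *ᵥ x ≠ 0 := by
        by_contra h
        push_neg at h
        apply hx
        have : (∑ j, P j) *ᵥ x = 0 := by
          rw [hsumMulVec]
          exact Finset.sum_eq_zero fun j _ => h j
        rwa [hsum, one_mulVec] at this
      obtain ⟨j, hj⟩ := hne
      have hnn : ∀ v : Fin n → ℝ, 0 ≤ v ⬝ᵥ v :=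
        fun v => Finset.sum_nonneg fun i _ => mul_self_nonneg (v i)
      refine Finset.sum_pos' (fun k _ => hnn _) ⟨j, Finset.mem_univ j, ?_⟩
      have := dotProduct_self_eq_zero (v := P j *ᵥ x)
      rcases lt_or_eq_of_le (hnn (P j *ᵥ x)) with h | h
      · exact h
      · exact absurd (this.mp h.symm) hj
  · rw [hmul]
    unfold Matrix.IsSymm
    rw [transpose_sum]
    refine Finset.sum_congr rfl fun j _ => ?_
    rw [transpose_smul, transpose_mul, transpose_transpose]
end

section
/- Let K be an n×m real matrix and s > 0 a real number, and define the (n+m)×(n+m) block matrix A_c := fromBlocks 0 (s·K) ((1/2)·Kᵀ) 0. Then the block-diagonal matrix H_c := fromBlocks I_n 0 0 (2s·I_m) is a symmetrizer for A_c: H_c is symmetric, positive definite, and H_c·A_c = fromBlocks 0 (s·K) (s·Kᵀ) 0 is symmetric. -/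
open Matrix

/-- For the constraint-propagation symbol `A_c = fromBlocks 0 (s·K) ((1/2)·Kᵀ) 0` with
`s > 0`, the block-diagonal matrix `H_c = fromBlocks I 0 0 (2s·I)` is a symmetrizer:
`H_c` is symmetric, positive definite, and `H_c·A_c = fromBlocks 0 (s·K) (s·Kᵀ) 0`
is symmetric. -/
theorem constraintPropagation_symmetrizer
    {n m : ℕ} (K : Matrix (Fin n) (Fin m) ℝ) (s : ℝ) (hs : 0 < s)
    (Ac : Matrix (Fin n ⊕ Fin m) (Fin n ⊕ Fin m) ℝ)
    (hAc : Ac = Matrix.fromBlocks 0 (s • K) ((1/2 : ℝ) • Kᵀ) 0)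
    (Hc : Matrix (Fin n ⊕ Fin m) (Fin n ⊕ Fin m) ℝ)
    (hHc : Hc = Matrix.fromBlocks 1 0 0 ((2*s) • (1 : Matrix (Fin m) (Fin m) ℝ))) :
    Hc.IsSymm ∧ Hc.PosDef ∧
    Hc * Ac = Matrix.fromBlocks 0 (s • K) (s • Kᵀ) 0 ∧
    (Hc * Ac).IsSymm := by
  have hdiag : Hc = Matrix.diagonal (Sum.elim (fun _ : Fin n => (1 : ℝ))
      (fun _ : Fin m => 2 * s)) := by
    rw [hHc]
    ext (i | i) (j | j) <;>
      simp [Matrix.diagonal_apply, Matrix.one_apply, Matrix.smul_apply] <;>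
      split_ifs <;> simp
  have hsymm : Hc.IsSymm := by
    rw [hdiag]; exact Matrix.isSymm_diagonal _
  have hpos : Hc.PosDef := by
    rw [hdiag]
    refine Matrix.posDef_diagonal_iff.mpr ?_
    rintro (i | i) <;> simp <;> linarith
  have hprod : Hc * Ac = Matrix.fromBlocks 0 (s • K) (s • Kᵀ) 0 := by
    rw [hHc, hAc, Matrix.fromBlocks_multiply]
    simp
    rw [smul_smul]
    congr 1
    ring
  refine ⟨hsymm, hpos, hprod, ?_⟩
  rw [hprod]
  unfold Matrix.IsSymm
  rw [Matrix.fromBlocks_transpose]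
  simp
end

section
/- Let ν, ε, π, α, β, γ, κ, μ and E, C, P_n, P_T, N, h be real numbers with C ≠ 0 and h ≠ 0, and define the transformed coefficients ν' := ν − α, ε' := ε − E·α − C·β, π' := π − P_n·α − P_T·β, γ' := γ − N·μ, κ' := κ − N·h·μ. Then the frame-invariant combinations f := π − (P_T/C)·ε + ((P_T·E/C) − P_n)·ν and ℓ := γ − κ/h are unchanged: π' − (P_T/C)·ε' + ((P_T·E/C) − P_n)·ν' = f and γ' − κ'/h = ℓ. -/
/-- The combinations `f = π − (P_T/C)·ε + ((P_T·E/C) − P_n)·ν` and `ℓ = γ − κ/h`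
are invariant under a first-order change of frame. -/
theorem frameInvariant_transport_coefficients
    (ν ε π α β γ κ μ E C P_n P_T N h : ℝ) (hC : C ≠ 0) (hh : h ≠ 0)
    (ν' ε' π' γ' κ' : ℝ)
    (hν' : ν' = ν - α)
    (hε' : ε' = ε - E*α - C*β)
    (hπ' : π' = π - P_n*α - P_T*β)
    (hγ' : γ' = γ - N*μ)
    (hκ' : κ' = κ - N*h*μ) :
    π' - (P_T/C)*ε' + ((P_T*E/C) - P_n)*ν' = π - (P_T/C)*ε + ((P_T*E/C) - P_n)*ν ∧
    γ' - κ'/h = γ - κ/h := by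
  subst hν' hε' hπ' hγ' hκ'; constructor <;> field_simp <;> ring
end
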